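/- arXiv:1601.05482 — 3 statements merged into one kernel-verified Lean document; each statement's English description precedes it below -/
import Mathlib

section
/- Let H be a group and J a subgroup of H that is not virtually abelian. Let {ρₙ : H → PSL(2,ℂ)} be a sequence of discrete and faithful representations which converges up to inner automorphism on J, i.e. there exist kₙ ∈ H such that {ρₙ ∘ I_{kₙ}|_J} converges pointwise to a discrete and faithful representation of J. Let {gₙ} be a sequence in PSL(2,ℂ), and suppose there exist hₙ ∈ H and a compact subset K of PSL(2,ℂ) such that ρₙ(hₙ) gₙ⁻¹ ∈ K for all n. Then, after passing to a subsequence, there exist h′ₙ ∈ H such that {(ρₙ^{gₙ}) ∘ I_{h′ₙ}|_J} converges pointwise to a discrete and faithful representation of J; that is, a subsequence of {ρₙ^{gₙ}} also converges up to inner automorphism on J. -/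
open Matrix Filter Topology

/-- `SL(2,ℂ)`. -/
abbrev SL2C := Matrix.SpecialLinearGroup (Fin 2) ℂ

/-- The topology on `SL(2,ℂ)` induced from the matrix topology. -/
noncomputable instance : TopologicalSpace SL2C :=
  TopologicalSpace.induced (fun A => (A : Matrix (Fin 2) (Fin 2) ℂ)) inferInstance

/-- `PSL(2,ℂ) = SL(2,ℂ)/{±I}`, with the quotient topology. -/
abbrev PSL2C := Matrix.ProjectiveSpecialLinearGroup (Fin 2) ℂ

/-- A representation into `PSL(2,ℂ)` is discrete and faithful if it is injective and
its image is a discrete subgroup. -/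
def IsDiscreteFaithful {G : Type*} [Group G] (ρ : G →* PSL2C) : Prop :=
  Function.Injective ρ ∧ DiscreteTopology ρ.range

/-- A group is virtually abelian if it has an abelian subgroup of finite index. -/
def VirtuallyAbelian (G : Type*) [Group G] : Prop :=
  ∃ A : Subgroup G, IsMulCommutative A ∧ A.FiniteIndex

/-- The conjugate representation `ρ^g : h ↦ g ρ(h) g⁻¹`. -/
def conjRep {G : Type*} [Group G] (g : PSL2C) (ρ : G →* PSL2C) : G →* PSL2C :=
  (MulAut.conj g).toMonoidHom.comp ρ

/-- Pointwise convergence of a sequence of representations into `PSL(2,ℂ)`. -/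
def TendstoRep {G : Type*} [Group G] (ρs : ℕ → G →* PSL2C) (ρ : G →* PSL2C) : Prop :=
  ∀ g : G, Tendsto (fun n => ρs n g) atTop (𝓝 (ρ g))


/-! With `aₙ = ρₙ(hₙ) gₙ⁻¹`, the representation `ρₙ^{gₙ} ∘ I_{hₙ⁻¹ kₙ}` is the conjugate of
`ρₙ ∘ I_{kₙ}` by `aₙ⁻¹`. The `aₙ` lie in a compact set, so along a subsequence they converge to
some `q`, and then these conjugates converge to `σ^{q⁻¹}`, which is again discrete and faithful. -/

instance : IsTopologicalGroup SL2C := Matrix.SpecialLinearGroup.topologicalGroup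

instance : FirstCountableTopology SL2C :=
  inferInstanceAs (FirstCountableTopology {A : Fin 2 → Fin 2 → ℂ // Matrix.det A = 1})

section

variable {G : Type*} [Group G]

lemma coe_range_conjRep (q : PSL2C) (ρ : G →* PSL2C) :
    ((conjRep q ρ).range : Set PSL2C) =
      Homeomorph.smul (ConjAct.toConjAct q) '' (ρ.range : Set PSL2C) := by
  simp only [MonoidHom.coe_range, conjRep, MonoidHom.coe_comp, Set.range_comp]
  rfl

lemma IsDiscreteFaithful.conjRep {ρ : G →* PSL2C} (hρ : IsDiscreteFaithful ρ) (q : PSL2C) :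
    IsDiscreteFaithful (conjRep q ρ) := by
  obtain ⟨hinj, hdisc⟩ := hρ
  refine ⟨(MulAut.conj q).injective.comp hinj, ?_⟩
  have := ((Homeomorph.smul (ConjAct.toConjAct q)).image (ρ.range : Set PSL2C)).discreteTopology
  rwa [← coe_range_conjRep] at this

lemma TendstoRep.comp_strictMono {ρs : ℕ → G →* PSL2C} {ρ : G →* PSL2C} (hρ : TendstoRep ρs ρ)
    {φ : ℕ → ℕ} (hφ : StrictMono φ) : TendstoRep (fun n => ρs (φ n)) ρ := fun x =>
  (hρ x).comp hφ.tendsto_atTop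

lemma TendstoRep.conjRep {ρs : ℕ → G →* PSL2C} {ρ : G →* PSL2C} (hρ : TendstoRep ρs ρ)
    {c : ℕ → PSL2C} {q : PSL2C} (hc : Tendsto c atTop (𝓝 q)) :
    TendstoRep (fun n => conjRep (c n) (ρs n)) (conjRep q ρ) := fun x =>
  (hc.mul (hρ x)).mul hc.inv

lemma conjRep_comp_conj (g : PSL2C) (ρ : G →* PSL2C) (h k : G) :
    (conjRep g ρ).comp (MulAut.conj (h⁻¹ * k)).toMonoidHom =
      conjRep (ρ h * g⁻¹)⁻¹ (ρ.comp (MulAut.conj k).toMonoidHom) := by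
  ext x
  simp only [conjRep, MonoidHom.comp_apply, MulEquiv.coe_toMonoidHom, MulAut.conj_apply]
  simp only [map_mul, map_inv]
  group

end

theorem subseq_converges_up_to_inner_of_bounded_general {H : Type*} [Group H] (J : Subgroup H)
    (ρs : ℕ → H →* PSL2C)
    (k : ℕ → H) (σ : J →* PSL2C) (hσ : IsDiscreteFaithful σ)
    (hconv : TendstoRep
      (fun n => ((ρs n).comp (MulAut.conj (k n)).toMonoidHom).comp J.subtype) σ)
    (g : ℕ → PSL2C)
    (hbdd : ∃ (h : ℕ → H) (K : Set PSL2C), IsCompact K ∧ ∀ n, ρs n (h n) * (g n)⁻¹ ∈ K) :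
    ∃ φ : ℕ → ℕ, StrictMono φ ∧
      ∃ (h' : ℕ → H) (σ' : J →* PSL2C), IsDiscreteFaithful σ' ∧
        TendstoRep (fun n =>
          ((conjRep (g (φ n)) (ρs (φ n))).comp
            (MulAut.conj (h' n)).toMonoidHom).comp J.subtype) σ' := by
  obtain ⟨h, K, hK, hmem⟩ := hbdd
  obtain ⟨q, -, φ, hφ, hlim⟩ := hK.tendsto_subseq hmem
  refine ⟨φ, hφ, fun n => (h (φ n))⁻¹ * k (φ n), conjRep q⁻¹ σ, hσ.conjRep q⁻¹, ?_⟩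
  simp_rw [conjRep_comp_conj]
  exact (hconv.comp_strictMono hφ).conjRep hlim.inv

/-- Lemma "converge and basepoint", part (1). Suppose `{ρₙ}` converges up to
inner automorphism on a nonelementary subgroup `J ≤ H`, and `{gₙ}` is a sequence in `PSL(2,ℂ)`
such that `{ρₙ(hₙ)gₙ⁻¹}` lies in a compact set for some `hₙ ∈ H`. Then a subsequence of
`{ρₙ^{gₙ}}` also converges up to inner automorphism on `J`. -/
theorem subseq_converges_up_to_inner_of_bounded {H : Type*} [Group H] (J : Subgroup H)
    (hJ : ¬ VirtuallyAbelian J)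
    (ρs : ℕ → H →* PSL2C) (hρs : ∀ n, IsDiscreteFaithful (ρs n))
    (k : ℕ → H) (σ : J →* PSL2C) (hσ : IsDiscreteFaithful σ)
    (hconv : TendstoRep
      (fun n => ((ρs n).comp (MulAut.conj (k n)).toMonoidHom).comp J.subtype) σ)
    (g : ℕ → PSL2C)
    (hbdd : ∃ (h : ℕ → H) (K : Set PSL2C), IsCompact K ∧ ∀ n, ρs n (h n) * (g n)⁻¹ ∈ K) :
    ∃ φ : ℕ → ℕ, StrictMono φ ∧
      ∃ (h' : ℕ → H) (σ' : J →* PSL2C), IsDiscreteFaithful σ' ∧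
        TendstoRep (fun n =>
          ((conjRep (g (φ n)) (ρs (φ n))).comp
            (MulAut.conj (h' n)).toMonoidHom).comp J.subtype) σ' :=
  subseq_converges_up_to_inner_of_bounded_general J ρs k σ hσ hconv g hbdd
end

section
/- Let Γ be a discrete, torsion-free subgroup of PSL(2,ℂ), let g be a nontrivial element of Γ, let h ∈ Γ, and suppose h g^m h⁻¹ = g^n for some positive integers m and n. Then m = n and h commutes with g. In particular, a nontrivial element of a torsion-free discrete subgroup of PSL(2,ℂ) cannot have two distinct positive powers that are conjugate in the group. -/
open Matrix Filter Topology

/-! Lift `g, h` to `G, H ∈ SL(2,ℂ)`. Squaring removes the sign ambiguity of the lifts, so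
`H G^(2m) H⁻¹ = G^(2n)` holds exactly. Let `λ, λ⁻¹` be the eigenvalues of `G`.

If `λ² ≠ 1`, `G` is diagonalizable, so `λ` is not a root of unity (otherwise `g` would be torsion)
and comparing traces, `λ^(2m) + λ^(-2m) = λ^(2n) + λ^(-2n)`, forces `m = n`.

If `λ² = 1`, then `G² = 1 + N` with `N² = 0`, `N ≠ 0`, and the relation says that `H` rescales `N`
by `n / m`. If `m ≠ n`, conjugating `G²` by the powers of `H` or of `H⁻¹` gives elements of `Γ`
converging to `1`, contradicting discreteness.

Finally, for `m = n`, `H` commutes with the non-scalar matrix `G^(2m)`, whose centralizer in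
`M₂(ℂ)` is commutative, so `H` commutes with `G`. -/

local notation "M₂" => Matrix (Fin 2) (Fin 2) ℂ

theorem one_add_pow_of_sq_eq_zero {R : Type*} [Semiring R] {N : R} (hN : N ^ 2 = 0) (k : ℕ) :
    (1 + N) ^ k = 1 + k • N := by
  induction k with
  | zero => simp
  | succ k ih =>
    rw [pow_succ, ih, add_mul, one_mul, mul_add, mul_one, smul_mul_assoc, ← sq, hN, smul_zero,
      add_zero, succ_nsmul', add_assoc]

theorem Units.eq_or_mul_eq_one_of_add_inv_eq_add_inv {K : Type*} [Field K] {x y : Kˣ}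
    (h : (x : K) + ↑x⁻¹ = y + ↑y⁻¹) : x = y ∨ x * y = 1 := by
  have key : ((x : K) - y) * (x * y - 1) = 0 := by
    rw [Units.val_inv_eq_inv_val, Units.val_inv_eq_inv_val] at h
    field_simp at h
    linear_combination h
  rcases mul_eq_zero.1 key with h | h
  · exact .inl (Units.ext (sub_eq_zero.1 h))
  · exact .inr (Units.ext (by simpa [sub_eq_zero] using h))

open Polynomial in
theorem Units.exists_add_inv_eq {K : Type*} [Field K] [IsAlgClosed K] (t : K) :
    ∃ u : Kˣ, (u : K) + ↑u⁻¹ = t := by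
  obtain ⟨x, hx⟩ := IsAlgClosed.exists_root (X ^ 2 - C t * X + 1 : K[X])
    (by rw [show (X ^ 2 - C t * X + 1 : K[X]).degree = 2 by compute_degree!]; decide)
  have hx' : x ^ 2 - t * x + 1 = 0 := by simpa using hx
  have hx0 : x ≠ 0 := by rintro rfl; simp at hx'
  refine ⟨Units.mk0 x hx0, ?_⟩
  simp only [Units.val_inv_eq_inv_val, Units.val_mk0]
  field_simp
  linear_combination hx'

theorem Subgroup.eventually_eq_one_of_tendsto_one {G : Type*} [Group G] [TopologicalSpace G]
    {Γ : Subgroup G} [DiscreteTopology Γ] {ι : Type*} {l : Filter ι} {x : ι → G}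
    (hx : ∀ i, x i ∈ Γ) (h : Tendsto x l (𝓝 1)) : ∀ᶠ i in l, x i = 1 := by
  have hΓ : Tendsto (fun i ↦ (⟨x i, hx i⟩ : Γ)) l (𝓝 1) := by
    rwa [Topology.IsInducing.subtypeVal.tendsto_nhds_iff]
  rw [nhds_discrete, tendsto_pure] at hΓ
  exact hΓ.mono fun i hi ↦ congrArg Subtype.val hi

namespace Matrix

theorem sq_eq_trace_smul_sub_det_smul {R : Type*} [CommRing R] (A : Matrix (Fin 2) (Fin 2) R) :
    A ^ 2 = A.trace • A - A.det • 1 := by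
  ext i j
  simp only [sq, mul_apply, sub_apply, smul_apply, one_apply, Fin.sum_univ_two, trace_fin_two,
    det_fin_two, smul_eq_mul]
  fin_cases i <;> fin_cases j <;> grind

variable {K : Type*} [Field K] {A B C : Matrix (Fin 2) (Fin 2) K} {a b : K}

theorem commute_of_commute_of_notMem_range_scalar (hA : A ∉ Set.range (scalar (Fin 2)))
    (hB : Commute A B) (hC : Commute A C) : Commute B C := by
  have hA' : A 0 1 ≠ 0 ∨ A 1 0 ≠ 0 ∨ A 0 0 - A 1 1 ≠ 0 := by
    contrapose! hA
    exact ⟨A 1 1, by ext i j; fin_cases i <;> fin_cases j <;> simp [hA, sub_eq_zero.1 hA.2.2]⟩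
  have entry {X Y : Matrix (Fin 2) (Fin 2) K} (h : Commute X Y) (i j : Fin 2) :
      X i 0 * Y 0 j + X i 1 * Y 1 j = Y i 0 * X 0 j + Y i 1 * X 1 j := by
    simpa [mul_apply, Fin.sum_univ_two] using congr_fun₂ h.eq i j
  -- `Commute A B` says that `(B 0 1, B 1 0, B 0 0 - B 1 1)` is proportional to the nonzero
  -- vector `(A 0 1, A 1 0, A 0 0 - A 1 1)`, and likewise for `C`.
  have := entry hB 0 0; have := entry hB 0 1; have := entry hB 1 0
  have := entry hC 0 0; have := entry hC 0 1; have := entry hC 1 0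
  ext i j
  simp only [mul_apply, Fin.sum_univ_two]
  fin_cases i <;> fin_cases j <;> rcases hA' with h | h | h <;> grind

theorem sub_smul_one_mul_self (htr : A.trace = a + b) (hdet : A.det = a * b) :
    (A - b • 1) * A = a • (A - b • 1) := by
  have h := sq_eq_trace_smul_sub_det_smul A
  rw [htr, hdet, sq] at h
  rw [sub_mul, h, smul_mul_assoc, one_mul]
  module

-- `(A - b • 1) / (a - b)` and `(A - a • 1) / (b - a)` are the spectral projections of `A`.
theorem smul_pow_eq_of_trace_det (htr : A.trace = a + b) (hdet : A.det = a * b) (k : ℕ) :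
    (a - b) • A ^ k = a ^ k • (A - b • 1) - b ^ k • (A - a • 1) := by
  induction k with
  | zero => simp only [pow_zero]; module
  | succ k ih =>
    have hb : (A - a • 1) * A = b • (A - a • 1) :=
      sub_smul_one_mul_self (by rw [htr, add_comm]) (by rw [hdet, mul_comm])
    rw [pow_succ, ← smul_mul_assoc, ih, sub_mul, smul_mul_assoc, smul_mul_assoc,
      sub_smul_one_mul_self htr hdet, hb, smul_smul, smul_smul, ← pow_succ, ← pow_succ]

theorem trace_pow_eq_of_trace_det (hab : a ≠ b) (htr : A.trace = a + b) (hdet : A.det = a * b)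
    (k : ℕ) : (A ^ k).trace = a ^ k + b ^ k := by
  have h := congrArg trace (smul_pow_eq_of_trace_det htr hdet k)
  simp only [trace_smul, trace_sub, trace_one, htr, Fintype.card_fin, smul_eq_mul] at h
  apply mul_left_cancel₀ (sub_ne_zero.2 hab)
  linear_combination h

theorem pow_eq_one_of_trace_det (hab : a ≠ b) (htr : A.trace = a + b) (hdet : A.det = a * b)
    {k : ℕ} (ha : a ^ k = 1) (hb : b ^ k = 1) : A ^ k = 1 := by
  have h := smul_pow_eq_of_trace_det htr hdet k
  rw [ha, hb, one_smul, one_smul, sub_sub_sub_cancel_left, ← sub_smul] at h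
  exact smul_right_injective _ (sub_ne_zero.2 hab) h

theorem sq_sub_one_sq_eq_zero (hdet : A.det = 1) (htr : A.trace ^ 2 = 4) :
    (A ^ 2 - 1) ^ 2 = 0 := by
  rw [trace_fin_two] at htr
  rw [det_fin_two] at hdet
  ext i j
  simp only [sq, mul_apply, sub_apply, one_apply, zero_apply, Fin.sum_univ_two]
  fin_cases i <;> fin_cases j <;> grind

end Matrix

namespace Matrix.SpecialLinearGroup

variable {n R : Type*} [Fintype n] [DecidableEq n] [CommRing R]

theorem mem_center_iff_coe_mem_range_scalar {A : SpecialLinearGroup n R} :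
    A ∈ Subgroup.center (SpecialLinearGroup n R) ↔ (A : Matrix n n R) ∈ Set.range (scalar n) := by
  rw [mem_center_iff]
  refine ⟨fun ⟨r, _, hr⟩ ↦ ⟨r, hr⟩, fun ⟨r, hr⟩ ↦ ⟨r, ?_, hr⟩⟩
  simpa [← hr] using A.2

theorem sq_eq_sq_of_mk_eq_mk {A B : SpecialLinearGroup (Fin 2) R}
    (h : (A : ProjectiveSpecialLinearGroup (Fin 2) R) = B) : A ^ 2 = B ^ 2 := by
  obtain ⟨z, hz, rfl⟩ : ∃ z ∈ Subgroup.center _, B = A * z :=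
    ⟨A⁻¹ * B, QuotientGroup.eq.1 h, by group⟩
  obtain ⟨r, hr, hrz⟩ := mem_center_iff.1 hz
  have hz2 : z ^ 2 = 1 := Subtype.ext (by
    rw [coe_pow, ← hrz, ← map_pow, ← Fintype.card_fin 2, hr, map_one, coe_one])
  rw [Commute.mul_pow (Subgroup.mem_center_iff.1 hz A), hz2, mul_one]

theorem trace_conj (H A : SpecialLinearGroup n R) :
    ((H * A * H⁻¹ : SpecialLinearGroup n R) : Matrix n n R).trace = (A : Matrix n n R).trace := by
  rw [coe_mul, trace_mul_comm, ← coe_mul, inv_mul_cancel_left]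

theorem eq_of_conj_pow_eq_pow_of_eigenvalue {K : Type*} [Field K]
    {G H : SpecialLinearGroup (Fin 2) K} {u : Kˣ}
    (htr : (G : Matrix (Fin 2) (Fin 2) K).trace = u + ↑u⁻¹) (hu : u ^ 2 ≠ 1)
    (hG : ¬IsOfFinOrder G) {m n : ℕ} (h : H * G ^ m * H⁻¹ = G ^ n) : m = n := by
  have hdet : (G : Matrix (Fin 2) (Fin 2) K).det = u * ↑u⁻¹ := by simp
  have hne : (u : K) ≠ ↑u⁻¹ := fun h ↦
    hu (by rw [sq]; nth_rw 2 [Units.ext h]; exact mul_inv_cancel u)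
  have hu' : ¬IsOfFinOrder u := by
    intro hfin
    obtain ⟨k, hk, hk1⟩ := isOfFinOrder_iff_pow_eq_one.1 hfin
    refine hG (isOfFinOrder_iff_pow_eq_one.2 ⟨k, hk, Subtype.ext ?_⟩)
    refine pow_eq_one_of_trace_det hne htr hdet ?_ ?_
    · rw [← Units.val_pow_eq_pow_val, hk1, Units.val_one]
    · rw [← Units.val_pow_eq_pow_val, inv_pow, hk1, inv_one, Units.val_one]
  have htrace := trace_conj H (G ^ m)
  rw [h, coe_pow, coe_pow, trace_pow_eq_of_trace_det hne htr hdet,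
    trace_pow_eq_of_trace_det hne htr hdet, ← Units.val_pow_eq_pow_val,
    ← Units.val_pow_eq_pow_val, ← Units.val_pow_eq_pow_val, ← Units.val_pow_eq_pow_val, inv_pow,
    inv_pow] at htrace
  rcases Units.eq_or_mul_eq_one_of_add_inv_eq_add_inv htrace.symm with h | h
  · exact injective_pow_iff_not_isOfFinOrder.2 hu' h
  · rw [← pow_add, ← pow_zero u] at h
    have := injective_pow_iff_not_isOfFinOrder.2 hu' h
    omega

end Matrix.SpecialLinearGroup

open Matrix.SpecialLinearGroup

section Discrete

variable {Γ : Subgroup PSL2C} [DiscreteTopology Γ]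

-- Conjugating `U` by `K ^ j` gives elements `1 + r ^ j • N` of `Γ` that converge to `1`.
theorem one_le_norm_of_conj_eq_smul {U K : SL2C} (hU : (U : PSL2C) ∈ Γ) (hK : (K : PSL2C) ∈ Γ)
    {N : M₂} (hUN : (U : M₂) = 1 + N) (hN0 : N ≠ 0) (hN : N ^ 2 = 0) {r : ℂ}
    (hKN : (K : M₂) * N * ((K⁻¹ : SL2C) : M₂) = r • N) : 1 ≤ ‖r‖ := by
  by_contra! hr
  have hr0 : r ≠ 0 := by
    rintro rfl
    rw [zero_smul] at hKN
    apply hN0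
    calc N = ((K⁻¹ * K : SL2C) : M₂) * N * ((K⁻¹ * K : SL2C) : M₂) := by simp
      _ = ((K⁻¹ : SL2C) : M₂) * ((K : M₂) * N * ((K⁻¹ : SL2C) : M₂)) * K := by
        simp only [coe_mul, Matrix.mul_assoc]
      _ = 0 := by rw [hKN, Matrix.mul_zero, Matrix.zero_mul]
  have hconj (j : ℕ) : ((K ^ j * U * (K ^ j)⁻¹ : SL2C) : M₂) = 1 + r ^ j • N := by
    induction j with
    | zero => simp [hUN]
    | succ j ih =>
      rw [show K ^ (j + 1) * U * (K ^ (j + 1))⁻¹ = K * (K ^ j * U * (K ^ j)⁻¹) * K⁻¹ by group,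
        coe_mul, coe_mul, ih, mul_add, add_mul, mul_one, ← coe_mul, mul_inv_cancel, coe_one,
        mul_smul_comm, smul_mul_assoc, hKN, smul_smul, pow_succ]
  have hlim : Tendsto (fun j : ℕ ↦ K ^ j * U * (K ^ j)⁻¹) atTop (𝓝 1) := by
    rw [(Topology.IsInducing.induced _).tendsto_nhds_iff]
    simp only [Function.comp_def, hconj]
    simpa using ((tendsto_pow_atTop_nhds_zero_of_norm_lt_one hr).smul_const N).const_add 1
  have hmem (j : ℕ) : ((K ^ j * U * (K ^ j)⁻¹ : SL2C) : PSL2C) ∈ Γ := by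
    simpa using Γ.mul_mem (Γ.mul_mem (Γ.pow_mem hK j) hU) (Γ.inv_mem (Γ.pow_mem hK j))
  obtain ⟨j, hj⟩ := (Subgroup.eventually_eq_one_of_tendsto_one hmem
    ((QuotientGroup.continuous_mk.tendsto 1).comp hlim)).exists
  rw [QuotientGroup.eq_one_iff, mem_center_iff_coe_mem_range_scalar, hconj] at hj
  obtain ⟨c, hc⟩ := hj
  have hscalar : r ^ j • N = scalar (Fin 2) (c - 1) := by rw [map_sub, hc, map_one]; abel
  have hc1 : c - 1 = 0 := by
    have h2 : scalar (Fin 2) ((c - 1) ^ 2) = scalar (Fin 2) 0 := by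
      rw [map_pow, ← hscalar, smul_pow, hN, smul_zero, map_zero]
    exact pow_eq_zero_iff two_ne_zero |>.1 (scalar_inj.1 h2)
  rw [hc1, map_zero, smul_eq_zero] at hscalar
  exact hscalar.elim (pow_ne_zero j hr0) hN0

theorem eq_of_conj_pow_eq_pow_of_unipotent {U H : SL2C} (hU : (U : PSL2C) ∈ Γ)
    (hH : (H : PSL2C) ∈ Γ) (hU1 : U ≠ 1) (hN : ((U : M₂) - 1) ^ 2 = 0) {m n : ℕ}
    (h : H * U ^ m * H⁻¹ = U ^ n) : m = n := by
  wlog hmn : m < n generalizing m n H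
  · rcases (not_lt.1 hmn).lt_or_eq with hlt | heq
    · exact (this (H := H⁻¹) (by simpa using Γ.inv_mem hH) (by rw [← h]; group) hlt).symm
    · exact heq.symm
  set N := (U : M₂) - 1
  have hUN : (U : M₂) = 1 + N := (add_sub_cancel _ _).symm
  have hN0 : N ≠ 0 := fun h0 ↦ hU1 (Subtype.ext (by rw [hUN, h0, add_zero, coe_one]))
  have hpow (k : ℕ) : ((U ^ k : SL2C) : M₂) = 1 + (k : ℂ) • N := by
    rw [coe_pow, hUN, one_add_pow_of_sq_eq_zero hN, Nat.cast_smul_eq_nsmul]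
  have hconj : ((H⁻¹ : SL2C) : M₂) * N * ((H⁻¹⁻¹ : SL2C) : M₂) = ((m : ℂ) / n) • N := by
    have h' := congrArg (fun X : SL2C ↦ (X : M₂)) (show H⁻¹ * U ^ n * H⁻¹⁻¹ = U ^ m by
      rw [← h]; group)
    rw [coe_mul, coe_mul, hpow, hpow, Matrix.mul_add, Matrix.add_mul, Matrix.mul_one, ← coe_mul,
      mul_inv_cancel, coe_one, mul_smul_comm, smul_mul_assoc, add_right_inj] at h'
    have hn0 : (n : ℂ) ≠ 0 := Nat.cast_ne_zero.2 (by omega)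
    rw [div_eq_inv_mul, mul_smul, ← h', smul_smul, inv_mul_cancel₀ hn0, one_smul]
  have := one_le_norm_of_conj_eq_smul hU (by simpa using Γ.inv_mem hH) hUN hN0 hN hconj
  rw [norm_div, Complex.norm_natCast, Complex.norm_natCast,
    one_le_div (Nat.cast_pos.2 (by omega))] at this
  exact absurd this (by exact_mod_cast hmn.not_ge)

theorem eq_of_conj_pow_two_mul_eq {G H : SL2C} (hG : (G : PSL2C) ∈ Γ) (hH : (H : PSL2C) ∈ Γ)
    (hGo : ¬IsOfFinOrder (G : PSL2C)) {m n : ℕ} (h : H * G ^ (2 * m) * H⁻¹ = G ^ (2 * n)) :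
    m = n := by
  obtain ⟨u, hu⟩ := Units.exists_add_inv_eq (G : M₂).trace
  by_cases hu2 : u ^ 2 = 1
  · have htr : (G : M₂).trace ^ 2 = 4 := by
      rw [← hu, inv_eq_of_mul_eq_one_right (by rwa [← sq] : u * u = 1), ← two_mul, mul_pow,
        ← Units.val_pow_eq_pow_val, hu2]
      norm_num
    refine eq_of_conj_pow_eq_pow_of_unipotent (U := G ^ 2) (by simpa using Γ.pow_mem hG 2) hH
      (fun h1 ↦ hGo (isOfFinOrder_iff_pow_eq_one.2
        ⟨2, two_pos, by rw [← QuotientGroup.mk_pow, h1, QuotientGroup.mk_one]⟩))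
      (by rw [coe_pow]; exact Matrix.sq_sub_one_sq_eq_zero G.2 htr) (by simpa [pow_mul] using h)
  · have := eq_of_conj_pow_eq_pow_of_eigenvalue hu.symm hu2
      (fun hfin ↦ hGo ((QuotientGroup.mk' _).isOfFinOrder hfin)) h
    omega

end Discrete

theorem no_conjugate_distinct_powers_general (Γ : Subgroup PSL2C)
    (hdisc : DiscreteTopology Γ) (htf : ∀ x : Γ, x ≠ 1 → ¬IsOfFinOrder x)
    (g h : PSL2C) (hg : g ∈ Γ) (hh : h ∈ Γ) (hg1 : g ≠ 1)
    (m n : ℕ) (hm : 0 < m)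
    (hconj : h * g ^ m * h⁻¹ = g ^ n) :
    m = n ∧ h * g = g * h := by
  have hgo : ¬IsOfFinOrder g := fun hfin ↦
    htf ⟨g, hg⟩ (by simpa [← Subtype.coe_ne_coe] using hg1) (Submonoid.isOfFinOrder_coe.1 hfin)
  obtain ⟨G, rfl⟩ := QuotientGroup.mk_surjective g
  obtain ⟨H, rfl⟩ := QuotientGroup.mk_surjective h
  have hsq : H * G ^ (2 * m) * H⁻¹ = G ^ (2 * n) := by
    have := sq_eq_sq_of_mk_eq_mk (A := H * G ^ m * H⁻¹) (B := G ^ n) (by simpa using hconj)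
    rwa [conj_pow, ← pow_mul, ← pow_mul, mul_comm m, mul_comm n] at this
  obtain rfl : m = n := eq_of_conj_pow_two_mul_eq hg hh hgo hsq
  refine ⟨rfl, ?_⟩
  have hA : ((G ^ (2 * m) : SL2C) : M₂) ∉ Set.range (scalar (Fin 2)) := by
    rw [← mem_center_iff_coe_mem_range_scalar, ← QuotientGroup.eq_one_iff]
    exact fun h1 ↦ hgo (isOfFinOrder_iff_pow_eq_one.2 ⟨2 * m, by omega, by simpa using h1⟩)
  have hHG : Commute (H : M₂) G := commute_of_commute_of_notMem_range_scalar hA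
    ((Commute.map (mul_inv_eq_iff_eq_mul.1 hsq) coeMonoidHom).symm)
    (((Commute.refl G).pow_left _).map coeMonoidHom)
  exact congrArg QuotientGroup.mk (Subtype.ext hHG.eq : H * G = G * H)

/-- In a discrete, torsion-free subgroup `Γ` of `PSL(2,ℂ)`, if a nontrivial
element `g` satisfies `h gᵐ h⁻¹ = gⁿ` for some `h ∈ Γ` and positive integers `m, n`, then
`m = n` and `h` commutes with `g`; in particular no two distinct positive powers of `g` are
conjugate in `Γ`. -/
theorem no_conjugate_distinct_powers (Γ : Subgroup PSL2C)
    (hdisc : DiscreteTopology Γ) (htf : ∀ x : Γ, x ≠ 1 → ¬IsOfFinOrder x)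
    (g h : PSL2C) (hg : g ∈ Γ) (hh : h ∈ Γ) (hg1 : g ≠ 1)
    (m n : ℕ) (hm : 0 < m) (hn : 0 < n)
    (hconj : h * g ^ m * h⁻¹ = g ^ n) :
    m = n ∧ h * g = g * h :=
  no_conjugate_distinct_powers_general Γ hdisc htf g h hg hh hg1 m n hm hconj
end

section
/- Let {fₙ : ℤ × ℤ → ℂ} be a sequence of additive group homomorphisms converging pointwise to an additive homomorphism f : ℤ × ℤ → ℂ, where f is injective and the image subgroup f(ℤ × ℤ) is a discrete subset of ℂ. If vₙ ∈ ℤ × ℤ is any sequence such that fₙ(vₙ) converges to some z ∈ ℂ, then z ∈ f(ℤ × ℤ). (That is, for discrete rank-two groups of translations of the plane, every geometric limit of elements of the approximating groups already lies in the algebraic limit group.) -/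
open Matrix Filter Topology

/-! The generators `f (1, 0)`, `f (0, 1)` of the discrete group `f (ℤ × ℤ)` are `ℤ`-independent,
hence `ℝ`-independent, so the real-linear extension `F` of `f` to `ℝ²` is injective and therefore
bounded below. Pointwise convergence on the basis makes the extensions `Fₙ` of `fₙ` converge to
`F` in operator norm, so `Fₙ` is eventually bounded below uniformly: `vₙ` stays bounded and
`f (vₙ) - fₙ (vₙ) → 0`. Thus `z` is a limit of points of `f (ℤ × ℤ)`, which is closed, being a
discrete subgroup. -/

theorem AddMonoidHom.map_eq_zsmul_add_zsmul {M : Type*} [AddCommGroup M] (g : ℤ × ℤ →+ M)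
    (w : ℤ × ℤ) : g w = w.1 • g (1, 0) + w.2 • g (0, 1) := by
  rw [← map_zsmul, ← map_zsmul, ← map_add]
  congr 1
  ext <;> simp

section

variable {E : Type*} [NormedAddCommGroup E] [NormedSpace ℝ E]

theorem linearIndependent_real_of_discrete_span_int [FiniteDimensional ℝ E] {ι : Type*}
    [Fintype ι] {u : ι → E} (hu : LinearIndependent ℤ u)
    (hdisc : DiscreteTopology (Submodule.span ℤ (Set.range u))) : LinearIndependent ℝ u := by
  rw [linearIndependent_iff_card_eq_finrank_span, Real.finrank_eq_int_finrank_of_discrete hdisc,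
    ← linearIndependent_iff_card_eq_finrank_span]
  exact hu

namespace AddMonoidHom

noncomputable def realExtension (g : ℤ × ℤ →+ E) : ℝ × ℝ →L[ℝ] E :=
  (ContinuousLinearMap.fst ℝ ℝ ℝ).smulRight (g (1, 0)) +
    (ContinuousLinearMap.snd ℝ ℝ ℝ).smulRight (g (0, 1))

theorem realExtension_apply (g : ℤ × ℤ →+ E) (x : ℝ × ℝ) :
    g.realExtension x = x.1 • g (1, 0) + x.2 • g (0, 1) :=
  rfl

theorem realExtension_intCast (g : ℤ × ℤ →+ E) (w : ℤ × ℤ) :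
    g.realExtension ((w.1 : ℝ), (w.2 : ℝ)) = g w := by
  rw [realExtension_apply, Int.cast_smul_eq_zsmul, Int.cast_smul_eq_zsmul, ← map_eq_zsmul_add_zsmul]

theorem injective_realExtension [FiniteDimensional ℝ E] {g : ℤ × ℤ →+ E}
    (hinj : Function.Injective g) (hdisc : DiscreteTopology g.range) :
    Function.Injective g.realExtension := by
  have hint : LinearIndependent ℤ ![g (1, 0), g (0, 1)] := by
    refine LinearIndependent.pair_iff.mpr fun s t hst => ?_
    have : ((s, t) : ℤ × ℤ) = 0 := hinj (by rw [map_zero, map_eq_zsmul_add_zsmul]; exact hst)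
    simpa [Prod.ext_iff] using this
  have hspan : DiscreteTopology (Submodule.span ℤ (Set.range ![g (1, 0), g (0, 1)])) := by
    rw [← SetLike.isDiscrete_iff_discreteTopology]
    refine (SetLike.isDiscrete_iff_discreteTopology.mpr hdisc).mono ?_
    refine SetLike.coe_subset_coe.mpr (Submodule.span_le (p := g.range.toIntSubmodule) |>.mpr ?_)
    rintro _ ⟨i, rfl⟩
    fin_cases i <;> exact ⟨_, rfl⟩
  have hreal :=
    LinearIndependent.pair_iff.mp (linearIndependent_real_of_discrete_span_int hint hspan)
  refine (injective_iff_map_eq_zero _).mpr fun x hx => ?_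
  obtain ⟨h1, h2⟩ := hreal x.1 x.2 hx
  exact Prod.ext h1 h2

theorem tendsto_realExtension {ι : Type*} {l : Filter ι} {g : ι → ℤ × ℤ →+ E} {g₀ : ℤ × ℤ →+ E}
    (hg : ∀ w, Tendsto (fun i => g i w) l (𝓝 (g₀ w))) :
    Tendsto (fun i => (g i).realExtension) l (𝓝 g₀.realExtension) := by
  have hcont : Continuous fun p : E × E =>
      (ContinuousLinearMap.fst ℝ ℝ ℝ).smulRight p.1 +
        (ContinuousLinearMap.snd ℝ ℝ ℝ).smulRight p.2 :=
    continuous_clm_apply.mpr fun x => by simp only [_root_.add_apply,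
      ContinuousLinearMap.smulRight_apply]; fun_prop
  exact (hcont.tendsto _).comp ((hg (1, 0)).prodMk_nhds (hg (0, 1)))

end AddMonoidHom

end

section

variable {𝕜 E F : Type*} [NontriviallyNormedField 𝕜] [NormedAddCommGroup E] [NormedSpace 𝕜 E]
  [NormedAddCommGroup F] [NormedSpace 𝕜 F] {ι : Type*} {l : Filter ι} {L : ι → E →L[𝕜] F}
  {L₀ : E →L[𝕜] F} {K : NNReal}

theorem eventually_norm_le_of_tendsto_of_antilipschitz (hL : Tendsto L l (𝓝 L₀))
    (hK : AntilipschitzWith K L₀) : ∀ᶠ i in l, ∀ x, ‖x‖ ≤ 2 * K * ‖L i x‖ := by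
  have hsmall : ∀ᶠ i in l, K * ‖L₀ - L i‖ ≤ 1 / 2 := by
    have : Tendsto (fun i => K * ‖L₀ - L i‖) l (𝓝 (K * 0)) := by
      simpa using ((hL.const_sub L₀).norm).const_mul (K : ℝ)
    exact this.eventually (ge_mem_nhds (by norm_num))
  filter_upwards [hsmall] with i hi x
  have := calc
    ‖x‖ ≤ K * ‖L₀ x‖ := ZeroHomClass.bound_of_antilipschitz L₀ hK x
    _ ≤ K * (‖L i x‖ + ‖(L₀ - L i) x‖) := by
      gcongr
      simpa using norm_add_le (L i x) ((L₀ - L i) x)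
    _ ≤ K * ‖L i x‖ + K * ‖L₀ - L i‖ * ‖x‖ := by
      rw [mul_add, mul_assoc]
      gcongr
      exact (L₀ - L i).le_opNorm x
    _ ≤ K * ‖L i x‖ + 1 / 2 * ‖x‖ := by gcongr
  linarith

theorem tendsto_apply_of_tendsto_of_antilipschitz (hL : Tendsto L l (𝓝 L₀))
    (hK : AntilipschitzWith K L₀) {x : ι → E} {z : F}
    (hx : Tendsto (fun i => L i (x i)) l (𝓝 z)) : Tendsto (fun i => L₀ (x i)) l (𝓝 z) := by
  have hbdd : ∀ᶠ i in l, ‖x i‖ ≤ 2 * K * (‖z‖ + 1) := by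
    filter_upwards [eventually_norm_le_of_tendsto_of_antilipschitz hL hK,
      hx.norm.eventually (ge_mem_nhds (lt_add_one ‖z‖))] with i hi hz
    exact (hi (x i)).trans (by gcongr)
  have herr : Tendsto (fun i => (L₀ - L i) (x i)) l (𝓝 0) := by
    refine squeeze_zero_norm' ?_
      (by simpa using ((hL.const_sub L₀).norm).mul_const (2 * K * (‖z‖ + 1)))
    filter_upwards [hbdd] with i hi
    exact ((L₀ - L i).le_opNorm _).trans (by gcongr)
  simpa using hx.add herr

end

/-- For discrete rank-two groups of translations of the plane, geometric limits
lie in the algebraic limit: if additive homomorphisms `fₙ : ℤ × ℤ → ℂ` converge pointwise to an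
injective `f` with discrete image, and `fₙ(vₙ) → z` for some sequence `vₙ ∈ ℤ × ℤ`, then
`z` lies in the image of `f`. -/
theorem geometric_limit_in_algebraic_limit_planar
    (f' : ℕ → (ℤ × ℤ) →+ ℂ) (f : (ℤ × ℤ) →+ ℂ)
    (hconv : ∀ v : ℤ × ℤ, Tendsto (fun n => f' n v) atTop (𝓝 (f v)))
    (hinj : Function.Injective f)
    (hdisc : DiscreteTopology f.range)
    (v : ℕ → ℤ × ℤ) (z : ℂ)
    (hz : Tendsto (fun n => f' n (v n)) atTop (𝓝 z)) :
    z ∈ f.range := by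
  obtain ⟨K, -, hK⟩ := (f.realExtension : ℝ × ℝ →ₗ[ℝ] ℂ).injective_iff_antilipschitz.mp
    (f.injective_realExtension hinj hdisc)
  have hlim : Tendsto (fun n => f (v n)) atTop (𝓝 z) := by
    simpa only [AddMonoidHom.realExtension_intCast] using
      tendsto_apply_of_tendsto_of_antilipschitz (AddMonoidHom.tendsto_realExtension hconv) hK
        (x := fun n => (((v n).1 : ℝ), ((v n).2 : ℝ)))
        (by simpa only [AddMonoidHom.realExtension_intCast] using hz)
  exact AddSubgroup.isClosed_of_discrete.mem_of_tendsto hlim (.of_forall fun n => ⟨v n, rfl⟩)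
end
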